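/- There exists γ0 ∈ [3π/4, π), depending only on v3, such that for every γ ∈ (γ0, π) the map (α1, α2) ↦ Ẽ(α1, α2, γ) is continuous, symmetric (Ẽ(α1,α2,γ) = Ẽ(α2,α1,γ)) and strictly convex on the square [σ0(γ), 2π/3] × [σ0(γ), 2π/3]. -/

import Mathlib

open Real Set

noncomputable section

/-- `β̃(α1,α2,γ) := 2 arcsin √((1 − sin α1 sin α2 cos γ − cos α1 cos α2)/2)`. -/
def betaTilde (α1 α2 γ : ℝ) : ℝ :=
  2 * Real.arcsin
    (Real.sqrt ((1 - Real.sin α1 * Real.sin α2 * Real.cos γ - Real.cos α1 * Real.cos α2) / 2))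

/-- `Ẽ(α1,α2,γ) := v3(α1) + v3(α2) + v3(β̃(α1,α2,γ))`. -/
def Etilde (v3 : ℝ → ℝ) (α1 α2 γ : ℝ) : ℝ := v3 α1 + v3 α2 + v3 (betaTilde α1 α2 γ)

/-- `σ0(γ) := π − arcsin(√3/(2 sin(γ/2)))`. -/
def sigma0 (γ : ℝ) : ℝ := π - Real.arcsin (Real.sqrt 3 / (2 * Real.sin (γ / 2)))

/-- On the slice `γ = π` the function `β̃` is affine: `β̃(α1,α2,π) = 2π − α1 − α2`. -/
lemma betaTilde_pi {α1 α2 : ℝ} (h1 : π ≤ α1 + α2) (h2 : α1 + α2 ≤ 2 * π) :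
    betaTilde α1 α2 π = 2 * π - (α1 + α2) := by
  have hπ := Real.pi_pos
  have hc : (1 - Real.sin α1 * Real.sin α2 * Real.cos π - Real.cos α1 * Real.cos α2) / 2
      = (1 - Real.cos (α1 + α2)) / 2 := by
    rw [Real.cos_pi, Real.cos_add]; ring
  rw [betaTilde, hc, ← Real.sin_half_eq_sqrt (by linarith) h2]
  have hs : Real.sin ((α1 + α2) / 2) = Real.sin (π - (α1 + α2) / 2) := (Real.sin_pi_sub _).symm
  rw [hs, Real.arcsin_sin (by linarith) (by linarith)]
  ring


/-- Auxiliary: strict convexity of a slice of a twice differentiable function from the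
strict positivity of its Hessian in horizontal directions. -/
lemma aux_strictConvexOn
    (F : (ℝ × ℝ) × ℝ → ℝ) (U : Set ((ℝ × ℝ) × ℝ)) (hUopen : IsOpen U)
    (F1 : (ℝ × ℝ) × ℝ → ((ℝ × ℝ) × ℝ) →L[ℝ] ℝ)
    (F2 : (ℝ × ℝ) × ℝ → ((ℝ × ℝ) × ℝ) →L[ℝ] (((ℝ × ℝ) × ℝ) →L[ℝ] ℝ))
    (hF1 : ∀ z ∈ U, HasFDerivAt F (F1 z) z)
    (hF2 : ∀ z ∈ U, HasFDerivAt F1 (F2 z) z)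
    (γ : ℝ) (S : Set (ℝ × ℝ)) (hS : Convex ℝ S)
    (hmap : ∀ p ∈ S, ((p, γ) : (ℝ × ℝ) × ℝ) ∈ U)
    (hpos : ∀ p ∈ S, ∀ v : ℝ × ℝ, v ≠ 0 → 0 < F2 (p, γ) (v, 0) (v, 0)) :
    StrictConvexOn ℝ S (fun p => F (p, γ)) := by
  have key : ∀ (x w : (ℝ × ℝ) × ℝ) (t : ℝ), x + t • w ∈ U →
      HasDerivAt (fun s : ℝ => F (x + s • w)) (F1 (x + t • w) w) t ∧
      HasDerivAt (fun s : ℝ => F1 (x + s • w) w) (F2 (x + t • w) w w) t := by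
    intro x w t ht
    have hL : HasDerivAt (fun s : ℝ => x + s • w) w t := by
      simpa using ((hasDerivAt_id t).smul_const w).const_add x
    constructor
    · exact (hF1 _ ht).comp_hasDerivAt t hL
    · have h2 := (hF2 _ ht).comp_hasDerivAt t hL
      simpa using h2.clm_apply (hasDerivAt_const t w)
  constructor
  · exact hS
  · rintro x hx y hy hxy a b ha hb hab
    set w2 : (ℝ × ℝ) × ℝ := (y - x, 0) with hw2
    have hvne : y - x ≠ 0 := sub_ne_zero.mpr (Ne.symm hxy)
    have hmemS : ∀ t ∈ Icc (0 : ℝ) 1, x + t • (y - x) ∈ S := by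
      intro t ht
      have h7 := hS hx hy (by linarith [ht.2] : (0 : ℝ) ≤ 1 - t) ht.1 (by ring)
      have h8 : x + t • (y - x) = (1 - t) • x + t • y := by module
      rw [h8]; exact h7
    have heq : ∀ t : ℝ, ((x, γ) : (ℝ × ℝ) × ℝ) + t • w2 = (x + t • (y - x), γ) := by
      intro t; rw [hw2]; simp [Prod.ext_iff]
    have hLU : ∀ t ∈ Icc (0 : ℝ) 1, ((x, γ) + t • w2) ∈ U := by
      intro t ht; rw [heq t]; exact hmap _ (hmemS t ht)
    set g : ℝ → ℝ := fun t => F ((x, γ) + t • w2) with hg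
    have hg2 : ∀ t ∈ interior (Icc (0 : ℝ) 1), 0 < deriv^[2] g t := by
      intro t ht
      rw [interior_Icc] at ht
      have htmem : t ∈ Icc (0 : ℝ) 1 := Ioo_subset_Icc_self ht
      have htU : (x, γ) + t • w2 ∈ U := hLU t htmem
      have hUev : ∀ᶠ s : ℝ in nhds t, (x, γ) + s • w2 ∈ U := by
        have hcz : ContinuousAt (fun s : ℝ => ((x, γ) : (ℝ × ℝ) × ℝ) + s • w2) t := by
          fun_prop
        exact hcz.eventually_mem (hUopen.mem_nhds htU)
      have hdg : deriv g =ᶠ[nhds t] fun s : ℝ => F1 ((x, γ) + s • w2) w2 :=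
        hUev.mono fun s hs => ((key _ _ _ hs).1).deriv
      have h5 : deriv^[2] g = deriv (deriv g) := by
        rw [show (2 : ℕ) = 1 + 1 from rfl, Function.iterate_succ_apply', Function.iterate_one]
      have e4 : deriv^[2] g t = F2 ((x, γ) + t • w2) w2 w2 := by
        rw [h5, Filter.EventuallyEq.deriv_eq hdg]
        exact ((key _ _ _ htU).2).deriv
      rw [e4, heq t, hw2]
      exact hpos _ (hmemS t htmem) _ hvne
    have hgcont : ContinuousOn g (Icc 0 1) := fun t ht =>
      (((key _ _ _ (hLU t ht)).1).continuousAt).continuousWithinAt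
    have hgs := strictConvexOn_of_deriv2_pos (convex_Icc 0 1) hgcont hg2
    have h01 := hgs.2 (left_mem_Icc.mpr zero_le_one) (right_mem_Icc.mpr zero_le_one)
      (by norm_num) ha hb hab
    simp only [smul_eq_mul, mul_zero, mul_one, zero_add] at h01
    have hg0 : g 0 = F (x, γ) := by rw [hg]; norm_num
    have hg1 : g 1 = F (y, γ) := by
      show F ((x, γ) + (1 : ℝ) • w2) = F (y, γ)
      congr 1
      rw [hw2]; simp [Prod.ext_iff]
    have hgb : g b = F (a • x + b • y, γ) := by
      show F ((x, γ) + b • w2) = _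
      congr 1
      rw [heq b]
      have hxb : x + b • (y - x) = a • x + b • y := by
        rw [show a = 1 - b from by linarith]; module
      rw [hxb]
    rw [hg0, hg1, hgb] at h01
    exact h01

set_option maxHeartbeats 1000000 in
/-- There exists `γ0 ∈ [3π/4, π)`, depending only on `v3`, such that for every
`γ ∈ (γ0, π)` the map `(α1, α2) ↦ Ẽ(α1, α2, γ)` is continuous, symmetric and strictly convex
on the square `[σ0(γ), 2π/3]²`. -/
theorem Etilde_continuous_symmetric_strictConvex
    (v3 : ℝ → ℝ)
    (hv3_smooth : ContDiff ℝ (⊤ : ℕ∞) v3)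
    (hv3_symm : ∀ α : ℝ, v3 (2 * π - α) = v3 α)
    (hv3_nonneg : ∀ α ∈ Icc (0 : ℝ) (2 * π), 0 ≤ v3 α)
    (hv3_min : v3 (2 * π / 3) = 0)
    (hv3_min_only : ∀ α ∈ Icc (0 : ℝ) (2 * π), v3 α = 0 → α = 2 * π / 3 ∨ α = 4 * π / 3)
    (hv3_conv : 0 < iteratedDeriv 2 v3 (2 * π / 3)) :
    ∃ γ0 : ℝ, γ0 ∈ Ico (3 * π / 4) π ∧
      ∀ γ ∈ Ioo γ0 π,
        ContinuousOn (fun p : ℝ × ℝ => Etilde v3 p.1 p.2 γ)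
          (Icc (sigma0 γ) (2 * π / 3) ×ˢ Icc (sigma0 γ) (2 * π / 3)) ∧
        (∀ α1 α2 : ℝ, Etilde v3 α1 α2 γ = Etilde v3 α2 α1 γ) ∧
        StrictConvexOn ℝ (Icc (sigma0 γ) (2 * π / 3) ×ˢ Icc (sigma0 γ) (2 * π / 3))
          (fun p : ℝ × ℝ => Etilde v3 p.1 p.2 γ) := by
  have hπ := Real.pi_pos
  set d1 : ℝ → ℝ := deriv v3 with hd1def
  set d2 : ℝ → ℝ := deriv d1 with hd2def
  set c0 : ℝ := iteratedDeriv 2 v3 (2 * π / 3) with hc0def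
  have hv3inf : ContDiff ℝ (⊤ : ℕ∞) v3 := hv3_smooth.of_le (by simp)
  have hd1inf : ContDiff ℝ (⊤ : ℕ∞) d1 := by
    have := hv3inf.iterate_deriv 1
    simpa [hd1def] using this
  have hv3d : Differentiable ℝ v3 := hv3inf.differentiable (by simp)
  have hd1d : Differentiable ℝ d1 := hd1inf.differentiable (by simp)
  have hc0d2 : d2 (2 * π / 3) = c0 := by
    rw [hc0def, iteratedDeriv_succ, iteratedDeriv_succ, iteratedDeriv_zero]
  -- symmetry of the second derivative
  have hsymm1 : ∀ x : ℝ, d1 x = -d1 (2 * π - x) := by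
    intro x
    have hfun : v3 = fun y => v3 (2 * π - y) := funext fun y => (hv3_symm y).symm
    calc d1 x = deriv v3 x := rfl
      _ = deriv (fun y => v3 (2 * π - y)) x := by rw [← hfun]
      _ = -deriv v3 (2 * π - x) := deriv_comp_const_sub ..
  have hsymm2 : d2 (4 * π / 3) = c0 := by
    have hfun : d1 = fun y => -d1 (2 * π - y) := funext hsymm1
    have : d2 (4 * π / 3) = deriv (fun y => -d1 (2 * π - y)) (4 * π / 3) := by
      rw [hd2def, ← hfun]
    rw [this, deriv.fun_neg, deriv_comp_const_sub, neg_neg,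
      show 2 * π - 4 * π / 3 = 2 * π / 3 by ring, ← hd2def, hc0d2]
  -- the ambient function of three variables
  set F : (ℝ × ℝ) × ℝ → ℝ := fun z => Etilde v3 z.1.1 z.1.2 z.2 with hFdef
  have hFE : ∀ γ : ℝ, (fun p : ℝ × ℝ => Etilde v3 p.1 p.2 γ) = (fun p : ℝ × ℝ => F (p, γ)) :=
    fun _ => rfl
  set q : (ℝ × ℝ) × ℝ → ℝ := fun z =>
    (1 - Real.sin z.1.1 * Real.sin z.1.2 * Real.cos z.2 - Real.cos z.1.1 * Real.cos z.1.2) / 2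
    with hq
  have hqCD : ContDiff ℝ 2 q := by
    apply ContDiff.div_const
    exact (contDiff_const.sub
      (((Real.contDiff_sin.comp (contDiff_fst.comp contDiff_fst)).mul
        (Real.contDiff_sin.comp (contDiff_snd.comp contDiff_fst))).mul
        (Real.contDiff_cos.comp contDiff_snd))).sub
      ((Real.contDiff_cos.comp (contDiff_fst.comp contDiff_fst)).mul
        (Real.contDiff_cos.comp (contDiff_snd.comp contDiff_fst)))
  set U : Set ((ℝ × ℝ) × ℝ) := q ⁻¹' (Ioo 0 1) with hU
  have hUopen : IsOpen U := isOpen_Ioo.preimage hqCD.continuous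
  set z0 : (ℝ × ℝ) × ℝ := ((2 * π / 3, 2 * π / 3), π) with hz0
  have hz0U : z0 ∈ U := by
    have hs3 : Real.sin (2 * π / 3) = Real.sqrt 3 / 2 := by
      rw [show (2 : ℝ) * π / 3 = π - π / 3 by ring, Real.sin_pi_sub, Real.sin_pi_div_three]
    have hc3 : Real.cos (2 * π / 3) = -(1 / 2) := by
      rw [show (2 : ℝ) * π / 3 = π - π / 3 by ring, Real.cos_pi_sub, Real.cos_pi_div_three]
    have h33 : Real.sqrt 3 * Real.sqrt 3 = 3 := Real.mul_self_sqrt (by norm_num)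
    have : q z0 = 3 / 4 := by
      simp only [hq, hz0, Real.cos_pi, hs3, hc3]
      nlinarith [h33]
    simp only [hU, mem_preimage, this]
    norm_num
  have hFU : ContDiffOn ℝ 2 F U := by
    intro z hz
    have hz' : q z ∈ Ioo (0 : ℝ) 1 := hz
    apply ContDiffAt.contDiffWithinAt
    have hsq1 : Real.sqrt (q z) < 1 := by
      rw [show (1 : ℝ) = Real.sqrt 1 from (Real.sqrt_one).symm]
      exact Real.sqrt_lt_sqrt (le_of_lt hz'.1) hz'.2
    have hsqpos : 0 < Real.sqrt (q z) := Real.sqrt_pos.mpr hz'.1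
    have harc : ContDiffAt ℝ 2 (fun z => Real.arcsin (Real.sqrt (q z))) z :=
      (Real.contDiffAt_arcsin (by linarith) (ne_of_lt hsq1)).comp (g := Real.arcsin)
          (f := fun z => Real.sqrt (q z)) z
        ((Real.contDiffAt_sqrt (ne_of_gt hz'.1)).comp z hqCD.contDiffAt)
    have hv2 : ContDiff ℝ 2 v3 := hv3_smooth.of_le (WithTop.coe_le_coe.mpr le_top)
    exact ((hv2.contDiffAt.comp z ((contDiff_fst.comp contDiff_fst).contDiffAt)).add
      (hv2.contDiffAt.comp z ((contDiff_snd.comp contDiff_fst).contDiffAt))).add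
      (hv2.contDiffAt.comp z ((contDiffAt_const (c := (2 : ℝ))).mul harc))
  set F2 : (ℝ × ℝ) × ℝ → ((ℝ × ℝ) × ℝ) →L[ℝ] ((ℝ × ℝ) × ℝ) →L[ℝ] ℝ :=
    fderiv ℝ (fderiv ℝ F) with hF2def
  have hF1 : ∀ z ∈ U, HasFDerivAt F (fderiv ℝ F z) z := fun z hz =>
    ((hFU.differentiableOn (by norm_num)).differentiableAt (hUopen.mem_nhds hz)).hasFDerivAt
  have hF1CD : ContDiffOn ℝ 1 (fderiv ℝ F) U := hFU.fderiv_of_isOpen hUopen (by norm_num)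
  have hF2 : ∀ z ∈ U, HasFDerivAt (fderiv ℝ F) (F2 z) z := fun z hz =>
    ((hF1CD.differentiableOn (by norm_num)).differentiableAt (hUopen.mem_nhds hz)).hasFDerivAt
  have hF2cont : ContinuousOn F2 U := hF1CD.continuousOn_fderiv_of_isOpen hUopen (by norm_num)
  -- the chain rule along straight lines
  have key : ∀ (x w : (ℝ × ℝ) × ℝ) (t : ℝ), x + t • w ∈ U →
      HasDerivAt (fun s : ℝ => F (x + s • w)) (fderiv ℝ F (x + t • w) w) t ∧
      HasDerivAt (fun s : ℝ => fderiv ℝ F (x + s • w) w) (F2 (x + t • w) w w) t := by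
    intro x w t ht
    have hL : HasDerivAt (fun s : ℝ => x + s • w) w t := by
      simpa using ((hasDerivAt_id t).smul_const w).const_add x
    constructor
    · exact (hF1 _ ht).comp_hasDerivAt t hL
    · have h2 := (hF2 _ ht).comp_hasDerivAt t hL
      have h3 := h2.clm_apply (hasDerivAt_const t w)
      simpa using h3
  -- second derivatives of one–variable sections of v3
  have haff : ∀ (a c s : ℝ), HasDerivAt (fun s => v3 (a + s * c)) (d1 (a + s * c) * c) s := by
    intro a c s
    have hL : HasDerivAt (fun s : ℝ => a + s * c) c s := by
      simpa using ((hasDerivAt_id s).mul_const c).const_add a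
    exact ((hv3d _).hasDerivAt).comp s hL
  have haff2 : ∀ (a c s : ℝ),
      HasDerivAt (fun s => d1 (a + s * c) * c) (d2 (a + s * c) * c * c) s := by
    intro a c s
    have hL : HasDerivAt (fun s : ℝ => a + s * c) c s := by
      simpa using ((hasDerivAt_id s).mul_const c).const_add a
    exact (((hd1d _).hasDerivAt).comp s hL).mul_const c
  -- the Hessian of F at z0, applied to horizontal directions
  have hQ0 : ∀ v : ℝ × ℝ, F2 z0 (v, 0) (v, 0) = c0 * (v.1 ^ 2 + v.2 ^ 2 + (v.1 + v.2) ^ 2) := by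
    intro v
    set w : (ℝ × ℝ) × ℝ := (v, 0) with hw
    set h : ℝ → ℝ := fun s =>
      v3 (2 * π / 3 + s * v.1) + v3 (2 * π / 3 + s * v.2) + v3 (4 * π / 3 + s * (v.1 + v.2))
      with hh
    have hev : (fun s : ℝ => F (z0 + s • w)) =ᶠ[nhds 0] h := by
      have hcont : ContinuousAt (fun s : ℝ => (2 * π / 3 + s * v.1) + (2 * π / 3 + s * v.2)) 0 := by
        fun_prop
      have hmem : ∀ᶠ s in nhds 0,
          ((2 * π / 3 + s * v.1) + (2 * π / 3 + s * v.2)) ∈ Ioo π (2 * π) := by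
        apply hcont.eventually_mem
        apply Ioo_mem_nhds <;> · norm_num; linarith
      filter_upwards [hmem] with s hs
      have hβ := betaTilde_pi (le_of_lt hs.1) (le_of_lt hs.2)
      have hzw : z0 + s • w = ((2 * π / 3 + s * v.1, 2 * π / 3 + s * v.2), π) := by
        simp only [hz0, hw, Prod.smul_mk, Prod.mk_add_mk, smul_eq_mul, smul_zero, add_zero,
          Prod.smul_def]
        norm_num
      rw [hzw]
      calc F ((2 * π / 3 + s * v.1, 2 * π / 3 + s * v.2), π)
          = v3 (2 * π / 3 + s * v.1) + v3 (2 * π / 3 + s * v.2)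
            + v3 (betaTilde (2 * π / 3 + s * v.1) (2 * π / 3 + s * v.2) π) := rfl
        _ = h s := by
            rw [hβ, show 2 * π - (2 * π / 3 + s * v.1 + (2 * π / 3 + s * v.2))
              = 2 * π - (4 * π / 3 + s * (v.1 + v.2)) by ring, hv3_symm]
    have hUnb : ∀ᶠ s : ℝ in nhds 0, z0 + s • w ∈ U := by
      have hcz : ContinuousAt (fun s : ℝ => z0 + s • w) 0 := by fun_prop
      apply hcz.eventually_mem
      simpa using hUopen.mem_nhds hz0U
    have hderiv_ev : deriv (fun s : ℝ => F (z0 + s • w)) =ᶠ[nhds 0]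
        fun s : ℝ => fderiv ℝ F (z0 + s • w) w :=
      hUnb.mono fun s hs => ((key z0 w s hs).1).deriv
    have e1 : deriv (deriv (fun s : ℝ => F (z0 + s • w))) 0 = F2 z0 w w := by
      rw [Filter.EventuallyEq.deriv_eq hderiv_ev]
      have h0U : z0 + (0 : ℝ) • w ∈ U := by simpa using hz0U
      have := ((key z0 w 0 h0U).2).deriv
      simpa using this
    have hderiv_h : deriv h = fun s => d1 (2 * π / 3 + s * v.1) * v.1
        + d1 (2 * π / 3 + s * v.2) * v.2 + d1 (4 * π / 3 + s * (v.1 + v.2)) * (v.1 + v.2) := by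
      funext s
      exact (((haff _ _ s).add (haff _ _ s)).add (haff _ _ s)).deriv
    have e2 : deriv (deriv h) 0 = c0 * (v.1 ^ 2 + v.2 ^ 2 + (v.1 + v.2) ^ 2) := by
      rw [hderiv_h]
      have := (((haff2 (2 * π / 3) v.1 0).fun_add (haff2 (2 * π / 3) v.2 0)).fun_add
        (haff2 (4 * π / 3) (v.1 + v.2) 0)).deriv
      rw [this]
      simp only [zero_mul, add_zero]
      rw [hc0d2, hsymm2]
      ring
    have e3 : deriv (deriv (fun s : ℝ => F (z0 + s • w))) 0 = deriv (deriv h) 0 :=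
      Filter.EventuallyEq.deriv_eq (hev.deriv)
    rw [← e1, e3, e2]
  -- a ball around z0 on which the Hessian stays close to the one at z0
  have hc0pos : 0 < c0 := hv3_conv
  have hcF2 : ContinuousAt F2 z0 := hF2cont.continuousAt (hUopen.mem_nhds hz0U)
  have hball : ∃ r > 0, ∀ z ∈ Metric.ball z0 r, z ∈ U ∧ ‖F2 z - F2 z0‖ < c0 / 2 := by
    have h1 : ∀ᶠ z in nhds z0, ‖F2 z - F2 z0‖ < c0 / 2 := by
      have hmb := hcF2.eventually_mem
        (Metric.ball_mem_nhds (F2 z0) (by positivity : (0 : ℝ) < c0 / 2))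
      filter_upwards [hmb] with z hz
      have hd := Metric.mem_ball.mp hz
      exact lt_of_eq_of_lt (dist_eq_norm (F2 z) (F2 z0)).symm hd
    have h2 : ∀ᶠ z in nhds z0, z ∈ U := hUopen.mem_nhds hz0U
    exact Metric.eventually_nhds_iff_ball.mp (h2.and h1)
  have hz0dist : ∀ (p1 p2 γ' : ℝ), dist (((p1, p2), γ') : (ℝ × ℝ) × ℝ) z0
      = max (max (dist p1 (2 * π / 3)) (dist p2 (2 * π / 3))) (dist γ' π) := by
    intro p1 p2 γ'
    rw [hz0, Prod.dist_eq, Prod.dist_eq]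
  clear hFdef hq hU hz0 hF2def hc0def hd1def hd2def
  clear_value F2 U q F z0 d2 d1 c0
  obtain ⟨r, hrpos, hrball⟩ := hball
  -- behaviour of sigma0 near π
  have hσπ : sigma0 π = 2 * π / 3 := by
    rw [sigma0, Real.sin_pi_div_two, show Real.sqrt 3 / (2 * 1) = Real.sqrt 3 / 2 by ring,
      ← Real.sin_pi_div_three, Real.arcsin_sin (by linarith) (by linarith)]
    ring
  have hσcont : ContinuousAt sigma0 π := by
    apply ContinuousAt.sub continuousAt_const
    apply Real.continuous_arcsin.continuousAt.comp
    exact ContinuousAt.div continuousAt_const (by fun_prop)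
      (by norm_num [Real.sin_pi_div_two])
  have hev2 : ∀ᶠ γ in nhds π, 2 * π / 3 - r < sigma0 γ := by
    have := hσcont.eventually_mem (s := Ioi (2 * π / 3 - r))
      (by rw [hσπ]; exact Ioi_mem_nhds (by linarith))
    simpa using this
  obtain ⟨δ, hδpos, hδσ⟩ := Metric.eventually_nhds_iff_ball.mp hev2
  have hmin : (0 : ℝ) < min δ r := lt_min hδpos hrpos
  refine ⟨max (3 * π / 4) (π - min δ r / 2), ⟨le_max_left _ _, ?_⟩, ?_⟩
  · exact max_lt (by linarith) (by linarith)
  · intro γ hγ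
    have hγ1 : max (3 * π / 4) (π - min δ r / 2) < γ := hγ.1
    have hγ2 : γ < π := hγ.2
    have hγr : π - γ < min δ r / 2 := by
      have := (le_max_right (3 * π / 4) (π - min δ r / 2)).trans_lt hγ1
      linarith
    have hdγ : dist γ π < min δ r := by
      rw [Real.dist_eq, abs_of_nonpos (by linarith)]
      linarith
    have hσγ : 2 * π / 3 - r < sigma0 γ :=
      hδσ γ (Metric.mem_ball.mpr (lt_of_lt_of_le hdγ (min_le_left _ _)))
    have hSball : ∀ p : ℝ × ℝ, p ∈ Icc (sigma0 γ) (2 * π / 3) ×ˢ Icc (sigma0 γ) (2 * π / 3) →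
        ((p, γ) : (ℝ × ℝ) × ℝ) ∈ Metric.ball z0 r := by
      rintro ⟨p1, p2⟩ ⟨⟨h11, h12⟩, h21, h22⟩
      rw [Metric.mem_ball, hz0dist]
      refine max_lt (max_lt ?_ ?_) (lt_of_lt_of_le hdγ (min_le_right _ _))
      · rw [Real.dist_eq, abs_of_nonpos (by linarith)]; linarith
      · rw [Real.dist_eq, abs_of_nonpos (by linarith)]; linarith
    have hmapsto : MapsTo (fun p : ℝ × ℝ => ((p, γ) : (ℝ × ℝ) × ℝ))
        (Icc (sigma0 γ) (2 * π / 3) ×ˢ Icc (sigma0 γ) (2 * π / 3)) U :=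
      fun p hp => (hrball _ (hSball p hp)).1
    refine ⟨?_, ?_, ?_⟩
    · -- continuity
      rw [hFE γ]
      exact hFU.continuousOn.comp (Continuous.continuousOn (by fun_prop)) hmapsto
    · -- symmetry
      intro α1 α2
      simp only [Etilde, betaTilde]
      rw [show (1 - Real.sin α2 * Real.sin α1 * Real.cos γ - Real.cos α2 * Real.cos α1)
        = (1 - Real.sin α1 * Real.sin α2 * Real.cos γ - Real.cos α1 * Real.cos α2) by ring]
      ring
    · -- strict convexity
      have hposS : ∀ p ∈ Icc (sigma0 γ) (2 * π / 3) ×ˢ Icc (sigma0 γ) (2 * π / 3),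
          ∀ v : ℝ × ℝ, v ≠ 0 → 0 < F2 (p, γ) (v, 0) (v, 0) := by
        intro p hp v hv
        have hzball : ((p, γ) : (ℝ × ℝ) × ℝ) ∈ Metric.ball z0 r := hSball p hp
        have hb1 : ‖F2 (p, γ) - F2 z0‖ < c0 / 2 := (hrball _ hzball).2
        have hQ := hQ0 v
        have hnpos : 0 < ‖v‖ := norm_pos_iff.mpr hv
        set w2 : (ℝ × ℝ) × ℝ := (v, 0) with hw2
        set z : (ℝ × ℝ) × ℝ := (p, γ) with hzdef
        have hsub : F2 z w2 w2 - F2 z0 w2 w2 = ((F2 z - F2 z0) w2) w2 := by simp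
        have hbound : |F2 z w2 w2 - F2 z0 w2 w2| ≤ c0 / 2 * (‖w2‖ * ‖w2‖) := by
          rw [hsub, ← Real.norm_eq_abs]
          calc ‖((F2 z - F2 z0) w2) w2‖ ≤ ‖(F2 z - F2 z0) w2‖ * ‖w2‖ :=
              ContinuousLinearMap.le_opNorm _ _
            _ ≤ (‖F2 z - F2 z0‖ * ‖w2‖) * ‖w2‖ := by
                gcongr
                exact ContinuousLinearMap.le_opNorm _ _
            _ ≤ c0 / 2 * (‖w2‖ * ‖w2‖) := by
                nlinarith [norm_nonneg w2, norm_nonneg (F2 z - F2 z0)]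
        have hwnorm : ‖w2‖ = ‖v‖ := by
          rw [hw2, Prod.norm_def]
          simp only [norm_zero]
          exact max_eq_left (norm_nonneg _)
        have hcomp : ‖v‖ * ‖v‖ ≤ v.1 ^ 2 + v.2 ^ 2 := by
          have hmax : ‖v‖ = max |v.1| |v.2| := by
            rw [Prod.norm_def, Real.norm_eq_abs, Real.norm_eq_abs]
          rw [hmax]
          rcases max_cases |v.1| |v.2| with ⟨he, _⟩ | ⟨he, _⟩ <;> rw [he] <;>
            nlinarith [sq_abs v.1, sq_abs v.2, abs_nonneg v.1, abs_nonneg v.2,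
              sq_nonneg v.1, sq_nonneg v.2]
        have habs := (abs_le.mp hbound).1
        rw [hwnorm] at habs
        have h6 : c0 * (v.1 ^ 2 + v.2 ^ 2 + (v.1 + v.2) ^ 2) ≥ c0 * (‖v‖ * ‖v‖) := by
          nlinarith [sq_nonneg (v.1 + v.2)]
        have h7 : 0 < c0 * (‖v‖ * ‖v‖) := mul_pos hc0pos (mul_pos hnpos hnpos)
        linarith [habs, hQ, h6, h7]
      rw [hFE γ]
      exact aux_strictConvexOn F U hUopen (fderiv ℝ F) F2 hF1 hF2 γ _
        ((convex_Icc _ _).prod (convex_Icc _ _)) (fun p hp => hmapsto hp) hposS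

end
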